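/- arXiv:1005.2249 — 4 statements merged into one kernel-verified Lean document; each statement's English description precedes it below -/
import Mathlib

section
/- If Q(x̄) ≤ inf_{‖x‖₀ ≤ ‖x̄‖₀ + s} Q(x) + ε̄ and Q has restricted upper strong convexity constant ρ₊(s), then the restricted gradient optimal constant satisfies ε_s(x̄) ≤ 2·√(ρ₊(s)·ε̄). -/
/-!
Perturbing `x̄` to `x̄ - t • u` with `‖u‖₀ ≤ s` stays inside the sparsity class over which `x̄` is
`ε̄`-optimal, so restricted smoothness gives `t ⟪∇Q(x̄), u⟫ ≤ ρ₊ t² ‖u‖₂² + ε̄` for every real `t`.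
A quadratic in `t` that stays nonnegative has nonpositive discriminant, which is exactly
`⟪∇Q(x̄), u⟫² ≤ 4 ρ₊ ε̄ ‖u‖₂²`; hence `2 √(ρ₊ ε̄)` is an admissible constant and bounds the least one.
-/

open scoped Classical

/-- `‖u‖₀`: number of nonzero coordinates. -/
noncomputable def l0 {d : ℕ} (u : Fin d → ℝ) : ℕ :=
  (Finset.univ.filter fun i => u i ≠ 0).card

/-- `‖u‖₂`: the Euclidean norm. -/
noncomputable def l2 {d : ℕ} (u : Fin d → ℝ) : ℝ :=
  Real.sqrt (∑ i, u i ^ 2)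

section SparseNorms

variable {d : ℕ}

lemma l0_smul_le (c : ℝ) (u : Fin d → ℝ) : l0 (c • u) ≤ l0 u :=
  Finset.card_le_card fun i hi => by
    simp only [Finset.mem_filter, Finset.mem_univ, true_and, Pi.smul_apply, smul_eq_mul] at hi ⊢
    exact right_ne_zero_of_mul hi

lemma l0_sub_le (u v : Fin d → ℝ) : l0 (u - v) ≤ l0 u + l0 v := by
  unfold l0
  refine (Finset.card_le_card fun i hi => ?_).trans (Finset.card_union_le _ _)
  simp only [Finset.mem_filter, Finset.mem_union, Finset.mem_univ, true_and, Pi.sub_apply] at hi ⊢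
  by_contra! h
  exact hi (by rw [h.1, h.2, sub_zero])

lemma l2_smul (c : ℝ) (u : Fin d → ℝ) : l2 (c • u) = |c| * l2 u := by
  unfold l2
  rw [← Real.sqrt_sq_eq_abs, ← Real.sqrt_mul (sq_nonneg c), Finset.mul_sum]
  simp only [Pi.smul_apply, smul_eq_mul, mul_pow]

end SparseNorms

lemma sq_le_four_mul_of_forall_mul_le {A B g : ℝ} (h : ∀ t : ℝ, t * g ≤ A * t ^ 2 + B) :
    g ^ 2 ≤ 4 * A * B := by
  have hdisc := discrim_le_zero (a := A) (b := -g) (c := B) fun t => by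
    nlinarith [h t]
  rw [discrim] at hdisc
  linarith [neg_sq g]

lemma abs_le_two_mul_sqrt_mul_of_sq_le {g c a : ℝ} (ha : 0 ≤ a) (h : g ^ 2 ≤ 4 * a ^ 2 * c) :
    |g| ≤ 2 * Real.sqrt c * a := by
  calc |g| = Real.sqrt (g ^ 2) := (Real.sqrt_sq_eq_abs g).symm
    _ ≤ Real.sqrt ((2 * a) ^ 2 * c) := Real.sqrt_le_sqrt (by linarith)
    _ = 2 * Real.sqrt c * a := by
      rw [Real.sqrt_mul (sq_nonneg _), Real.sqrt_sq (by positivity)]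
      ring

lemma fderiv_le_of_restricted_approx_min {d s : ℕ} {Q : (Fin d → ℝ) → ℝ} {xbar : Fin d → ℝ}
    {ρp εbar : ℝ}
    (hupper : ∀ x x' : Fin d → ℝ, l0 (x - x') ≤ s →
      Q x' - Q x - fderiv ℝ Q x (x' - x) ≤ ρp * (l2 (x - x')) ^ 2)
    (hopt : ∀ x : Fin d → ℝ, l0 x ≤ l0 xbar + s → Q xbar ≤ Q x + εbar)
    {v : Fin d → ℝ} (hv : l0 v ≤ s) :
    fderiv ℝ Q xbar v ≤ ρp * l2 v ^ 2 + εbar := by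
  have hsmooth := hupper xbar (xbar - v) (by rwa [sub_sub_cancel])
  rw [sub_sub_cancel, sub_sub_cancel_left, map_neg] at hsmooth
  have hmin := hopt (xbar - v) ((l0_sub_le xbar v).trans (Nat.add_le_add_left hv _))
  linarith

theorem stmt2_general (d s : ℕ) (Q : (Fin d → ℝ) → ℝ)
    (xbar : Fin d → ℝ)
    (ρp : ℝ)
    (hupper : ∀ x x' : Fin d → ℝ, l0 (x - x') ≤ s →
      Q x' - Q x - fderiv ℝ Q x (x' - x) ≤ ρp * (l2 (x - x')) ^ 2)
    (εbar : ℝ)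
    (hopt : ∀ x : Fin d → ℝ, l0 x ≤ l0 xbar + s → Q xbar ≤ Q x + εbar)
    (ε : ℝ)
    (hε : IsLeast {c : ℝ | 0 ≤ c ∧
      ∀ u : Fin d → ℝ, l0 u ≤ s → |fderiv ℝ Q xbar u| ≤ c * l2 u} ε) :
    ε ≤ 2 * Real.sqrt (ρp * εbar) := by
  refine hε.2 ⟨by positivity, fun u hu => ?_⟩
  have hline : ∀ t : ℝ, t * fderiv ℝ Q xbar u ≤ ρp * l2 u ^ 2 * t ^ 2 + εbar := fun t => by
    have h := fderiv_le_of_restricted_approx_min hupper hopt ((l0_smul_le t u).trans hu)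
    rwa [map_smul, smul_eq_mul, l2_smul, mul_pow, sq_abs, ← mul_assoc, mul_right_comm ρp] at h
  have hsq := sq_le_four_mul_of_forall_mul_le hline
  exact abs_le_two_mul_sqrt_mul_of_sq_le (Real.sqrt_nonneg _) (by linarith)

/-- If `Q(x̄) ≤ inf_{‖x‖₀ ≤ ‖x̄‖₀ + s} Q(x) + ε̄` and `Q` has restricted upper strong
convexity constant `ρ₊(s)`, then the restricted gradient optimal constant satisfies
`ε_s(x̄) ≤ 2√(ρ₊(s)·ε̄)`. -/
theorem stmt2 (d s : ℕ) (hs : 0 < s) (Q : (Fin d → ℝ) → ℝ)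
    (hQ : Differentiable ℝ Q) (xbar : Fin d → ℝ)
    (ρp : ℝ) (hρp : 0 < ρp)
    (hupper : ∀ x x' : Fin d → ℝ, l0 (x - x') ≤ s →
      Q x' - Q x - fderiv ℝ Q x (x' - x) ≤ ρp * (l2 (x - x')) ^ 2)
    (εbar : ℝ) (hεbar : 0 ≤ εbar)
    (hopt : ∀ x : Fin d → ℝ, l0 x ≤ l0 xbar + s → Q xbar ≤ Q x + εbar)
    (ε : ℝ)
    (hε : IsLeast {c : ℝ | 0 ≤ c ∧
      ∀ u : Fin d → ℝ, l0 u ≤ s → |fderiv ℝ Q xbar u| ≤ c * l2 u} ε) :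
    ε ≤ 2 * Real.sqrt (ρp * εbar) :=
  stmt2_general d s Q xbar ρp hupper εbar hopt ε hε
end

section
/- Let F, F̄ ⊂ {1,…,d}, supp(x̄) ⊂ F̄, and x = argmin{Q(z) : supp(z) ⊂ F}. Then for all s ≥ |F̄ \ F|: Q(x) − Q(x̄) ≤ 1.5·ρ₊(s)·‖x̄_{F̄\F}‖₂² + 0.5·ε_s(x̄)²/ρ₊(s). -/
open scoped Classical

/-!
Compare `x` with the competitor `x̄ - u`, where `u = x̄_{F̄\F}`: it is supported on `F`, so
`Q x ≤ Q (x̄ - u)`, and `u` is `s`-sparse, so restricted strong smoothness at `x̄` gives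
`Q (x̄ - u) ≤ Q x̄ + ε ‖u‖ + ρ ‖u‖²`. Young's inequality `ε ‖u‖ ≤ ρ ‖u‖² / 2 + ε² / (2ρ)`
finishes the bound.
-/

section Restriction

variable {d : ℕ}

lemma l0_indicator_le (S : Finset (Fin d)) (v : Fin d → ℝ) :
    l0 ((S : Set (Fin d)).indicator v) ≤ S.card := by
  refine Finset.card_le_card fun i hi => ?_
  simp only [Finset.mem_filter, Finset.mem_univ, true_and, Set.indicator_apply_ne_zero] at hi
  exact hi.1

lemma l2_indicator_sq (S : Finset (Fin d)) (v : Fin d → ℝ) :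
    l2 ((S : Set (Fin d)).indicator v) ^ 2 = ∑ i ∈ S, v i ^ 2 := by
  rw [l2, Real.sq_sqrt (Finset.sum_nonneg fun i _ => sq_nonneg _)]
  simp only [Set.indicator_apply, Finset.mem_coe, ite_pow, ne_eq, OfNat.ofNat_ne_zero,
    not_false_eq_true, zero_pow]
  rw [Finset.sum_ite_mem, Finset.univ_inter]

lemma sub_indicator_sdiff_eq_zero {F Fbar : Finset (Fin d)} {v : Fin d → ℝ}
    (hv : ∀ i ∉ Fbar, v i = 0) {i : Fin d} (hi : i ∉ F) :
    (v - ((Fbar \ F : Finset (Fin d)) : Set (Fin d)).indicator v) i = 0 := by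
  by_cases hiFbar : i ∈ Fbar
  · simp [hiFbar, hi]
  · simp [hv i hiFbar]

end Restriction

lemma mul_le_half_mul_sq_add_half_sq_div {ρ : ℝ} (hρ : 0 < ρ) (ε t : ℝ) :
    ε * t ≤ 0.5 * ρ * t ^ 2 + 0.5 * ε ^ 2 / ρ := by
  have key : 0.5 * ρ * t ^ 2 + 0.5 * ε ^ 2 / ρ - ε * t = (ρ * t - ε) ^ 2 / (2 * ρ) := by
    field_simp
    ring
  linarith [div_nonneg (sq_nonneg (ρ * t - ε)) (by positivity : (0 : ℝ) ≤ 2 * ρ)]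

theorem stmt4_general (d s : ℕ) (Q : (Fin d → ℝ) → ℝ)
    (F Fbar : Finset (Fin d)) (xbar x : Fin d → ℝ)
    (hsupp : ∀ i ∉ Fbar, xbar i = 0)
    (hxmin : ∀ z : Fin d → ℝ, (∀ i ∉ F, z i = 0) → Q x ≤ Q z)
    (ρp : ℝ) (hρp : 0 < ρp)
    (hupper : ∀ u v : Fin d → ℝ, l0 (u - v) ≤ s →
      Q v - Q u - fderiv ℝ Q u (v - u) ≤ ρp * (l2 (u - v)) ^ 2)
    (ε : ℝ)
    (hε : ∀ u : Fin d → ℝ, l0 u ≤ s → |fderiv ℝ Q xbar u| ≤ ε * l2 u)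
    (hscard : (Fbar \ F).card ≤ s) :
    Q x - Q xbar ≤ 1.5 * ρp * (∑ i ∈ Fbar \ F, xbar i ^ 2) + 0.5 * ε ^ 2 / ρp := by
  set u := ((Fbar \ F : Finset (Fin d)) : Set (Fin d)).indicator xbar
  have hu_sparse : l0 u ≤ s := (l0_indicator_le _ _).trans hscard
  have hmin : Q x ≤ Q (xbar - u) :=
    hxmin _ fun i hi => sub_indicator_sdiff_eq_zero hsupp hi
  have hsmooth := hupper xbar (xbar - u) (by simpa using hu_sparse)
  simp only [sub_sub_cancel, sub_sub_cancel_left, map_neg] at hsmooth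
  have hgrad := (abs_le.mp (hε u hu_sparse)).1
  have hyoung := mul_le_half_mul_sq_add_half_sq_div hρp ε (l2 u)
  rw [← l2_indicator_sq]
  linarith

/-- Lemma 1 of the paper: if `supp(x̄) ⊂ F̄` and `x` minimizes `Q` over vectors supported
on `F`, then for all `s ≥ |F̄ \ F|`:
`Q(x) − Q(x̄) ≤ 1.5·ρ₊(s)·‖x̄_{F̄\F}‖₂² + 0.5·ε_s(x̄)²/ρ₊(s)`. -/
theorem stmt4 (d s : ℕ) (Q : (Fin d → ℝ) → ℝ)
    (hQ : Differentiable ℝ Q) (hconv : ConvexOn ℝ Set.univ Q)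
    (F Fbar : Finset (Fin d)) (xbar x : Fin d → ℝ)
    (hsupp : ∀ i ∉ Fbar, xbar i = 0)
    (hxF : ∀ i ∉ F, x i = 0)
    (hxmin : ∀ z : Fin d → ℝ, (∀ i ∉ F, z i = 0) → Q x ≤ Q z)
    (ρp : ℝ) (hρp : 0 < ρp)
    (hupper : ∀ u v : Fin d → ℝ, l0 (u - v) ≤ s →
      Q v - Q u - fderiv ℝ Q u (v - u) ≤ ρp * (l2 (u - v)) ^ 2)
    (ε : ℝ) (hεnn : 0 ≤ ε)
    (hε : ∀ u : Fin d → ℝ, l0 u ≤ s → |fderiv ℝ Q xbar u| ≤ ε * l2 u)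
    (hscard : (Fbar \ F).card ≤ s) :
    Q x - Q xbar ≤ 1.5 * ρp * (∑ i ∈ Fbar \ F, xbar i ^ 2) + 0.5 * ε ^ 2 / ρp :=
  stmt4_general d s Q F Fbar xbar x hsupp hxmin ρp hρp hupper ε hε hscard
end

section
/- Let F, F̄ ⊂ {1,…,d}, supp(x̄) ⊂ F̄, and x = argmin{Q(z) : supp(z) ⊂ F}. Then for all s ≥ |F ∪ F̄|: ρ₋(s)·‖x − x̄‖₂² ≤ 2·[Q(x) − Q(x̄)] + ε_s(x̄)²/ρ₋(s). -/
/-! Lower restricted strong convexity at `x̄` gives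
`ρ ‖x − x̄‖² ≤ Q(x) − Q(x̄) − ∇Q(x̄)ᵀ(x − x̄) ≤ Q(x) − Q(x̄) + ε ‖x − x̄‖`, and `x − x̄` is
supported on `F ∪ F̄`, so it is `s`-sparse. Absorbing the linear term with
`ε t ≤ ε²/(2ρ) + ρ t²/2` finishes the proof. -/

open scoped Classical

lemma l0_le_card_of_eq_zero_of_notMem {d : ℕ} {S : Finset (Fin d)} {w : Fin d → ℝ}
    (hw : ∀ i ∉ S, w i = 0) : l0 w ≤ S.card := by
  refine Finset.card_le_card fun i hi => ?_
  by_contra hiS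
  exact (Finset.mem_filter.mp hi).2 (hw i hiS)

lemma l2_sub_comm {d : ℕ} (u v : Fin d → ℝ) : l2 (u - v) = l2 (v - u) := by
  simp only [l2, Pi.sub_apply]
  congr 1
  exact Finset.sum_congr rfl fun i _ => by ring

lemma mul_sq_le_two_mul_add_sq_div {ρ t a ε : ℝ} (hρ : 0 < ρ) (h : ρ * t ^ 2 ≤ a + ε * t) :
    ρ * t ^ 2 ≤ 2 * a + ε ^ 2 / ρ := by
  have hsq : 2 * ε * t - ρ * t ^ 2 ≤ ε ^ 2 / ρ := by
    rw [le_div_iff₀ hρ]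
    nlinarith [sq_nonneg (ρ * t - ε)]
  linarith

lemma mul_l2_sq_le_of_restricted_strongConvex {d s : ℕ} {Q : (Fin d → ℝ) → ℝ} {ρ ε : ℝ}
    (hρ : 0 < ρ) {xbar y : Fin d → ℝ}
    (hlower : ρ * l2 (xbar - y) ^ 2 ≤ Q y - Q xbar - fderiv ℝ Q xbar (y - xbar))
    (hε : ∀ u : Fin d → ℝ, l0 u ≤ s → |fderiv ℝ Q xbar u| ≤ ε * l2 u)
    (hy : l0 (y - xbar) ≤ s) :
    ρ * l2 (y - xbar) ^ 2 ≤ 2 * (Q y - Q xbar) + ε ^ 2 / ρ := by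
  rw [l2_sub_comm] at hlower
  have hgrad := neg_le_of_abs_le (hε _ hy)
  exact mul_sq_le_two_mul_add_sq_div hρ (by linarith)

theorem stmt5_general (d s : ℕ) (Q : (Fin d → ℝ) → ℝ)
    (F Fbar : Finset (Fin d)) (xbar x : Fin d → ℝ)
    (hsupp : ∀ i ∉ Fbar, xbar i = 0)
    (hxF : ∀ i ∉ F, x i = 0)
    (ρm : ℝ) (hρm : 0 < ρm)
    (hlower : ∀ u v : Fin d → ℝ, l0 (u - v) ≤ s →
      ρm * (l2 (u - v)) ^ 2 ≤ Q v - Q u - fderiv ℝ Q u (v - u))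
    (ε : ℝ)
    (hε : ∀ u : Fin d → ℝ, l0 u ≤ s → |fderiv ℝ Q xbar u| ≤ ε * l2 u)
    (hscard : (F ∪ Fbar).card ≤ s) :
    ρm * (l2 (x - xbar)) ^ 2 ≤ 2 * (Q x - Q xbar) + ε ^ 2 / ρm := by
  have hsparse : ∀ {w : Fin d → ℝ}, (w = x - xbar ∨ w = xbar - x) → l0 w ≤ s := by
    rintro w hw
    refine (l0_le_card_of_eq_zero_of_notMem fun i hi => ?_).trans hscard
    rw [Finset.mem_union, not_or] at hi
    rcases hw with rfl | rfl <;> simp [hxF i hi.1, hsupp i hi.2]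
  exact mul_l2_sq_le_of_restricted_strongConvex hρm
    (hlower xbar x (hsparse (.inr rfl))) hε (hsparse (.inl rfl))

/-- Lemma 2 of the paper: if `supp(x̄) ⊂ F̄` and `x` minimizes `Q` over vectors supported
on `F`, then for all `s ≥ |F ∪ F̄|`:
`ρ₋(s)·‖x − x̄‖₂² ≤ 2[Q(x) − Q(x̄)] + ε_s(x̄)²/ρ₋(s)`. -/
theorem stmt5 (d s : ℕ) (Q : (Fin d → ℝ) → ℝ)
    (hQ : Differentiable ℝ Q) (hconv : ConvexOn ℝ Set.univ Q)
    (F Fbar : Finset (Fin d)) (xbar x : Fin d → ℝ)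
    (hsupp : ∀ i ∉ Fbar, xbar i = 0)
    (hxF : ∀ i ∉ F, x i = 0)
    (hxmin : ∀ z : Fin d → ℝ, (∀ i ∉ F, z i = 0) → Q x ≤ Q z)
    (ρm : ℝ) (hρm : 0 < ρm)
    (hlower : ∀ u v : Fin d → ℝ, l0 (u - v) ≤ s →
      ρm * (l2 (u - v)) ^ 2 ≤ Q v - Q u - fderiv ℝ Q u (v - u))
    (ε : ℝ) (hεnn : 0 ≤ ε)
    (hε : ∀ u : Fin d → ℝ, l0 u ≤ s → |fderiv ℝ Q xbar u| ≤ ε * l2 u)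
    (hscard : (F ∪ Fbar).card ≤ s) :
    ρm * (l2 (x - xbar)) ^ 2 ≤ 2 * (Q x - Q xbar) + ε ^ 2 / ρm :=
  stmt5_general d s Q F Fbar xbar x hsupp hxF ρm hρm hlower ε hε hscard
end

section
/- (One-step contraction) Under the setting of the greedy progress lemma, if F̄ \ F ≠ ∅, then max(0, min_α Q(x + α e_j) − Q(x̄)) ≤ exp(−ρ₋(s)/(ρ₊(1)·|F̄\F|)) · max(0, Q(x) − Q(x̄)). -/
open scoped Classical

lemma quadMinAux (rho a : ℝ) (h : rho ≠ 0) :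
    -a / (2 * rho) * a + rho * (-a / (2 * rho)) ^ 2 = -(a ^ 2 / (4 * rho)) := by
  field_simp
  ring

/-- One-step contraction: in the setting of the greedy progress lemma, with
`F̄ \ F ≠ ∅`, `max(0, min_α Q(x + α e_j) − Q(x̄)) ≤ exp(−ρ₋(s)/(ρ₊(1)|F̄\F|)) · max(0, Q(x) − Q(x̄))`. -/
theorem stmt7 (d s : ℕ) (Q : (Fin d → ℝ) → ℝ)
    (hQ : Differentiable ℝ Q) (hconv : ConvexOn ℝ Set.univ Q)
    (F Fbar : Finset (Fin d)) (xbar x : Fin d → ℝ)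
    (hsupp : ∀ i ∉ Fbar, xbar i = 0)
    (hxF : ∀ i ∉ F, x i = 0)
    (hxmin : ∀ z : Fin d → ℝ, (∀ i ∉ F, z i = 0) → Q x ≤ Q z)
    (hne : (Fbar \ F).Nonempty)
    (ρp1 ρm : ℝ) (hρp1 : 0 < ρp1) (hρm : 0 < ρm) (hρ : ρm ≤ ρp1)
    (hupper1 : ∀ u v : Fin d → ℝ, l0 (u - v) ≤ 1 →
      Q v - Q u - fderiv ℝ Q u (v - u) ≤ ρp1 * (l2 (u - v)) ^ 2)
    (hlower : ∀ u v : Fin d → ℝ, l0 (u - v) ≤ s →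
      ρm * (l2 (u - v)) ^ 2 ≤ Q v - Q u - fderiv ℝ Q u (v - u))
    (hscard : (F ∪ Fbar).card ≤ s)
    (j : Fin d) (hj : ∀ i, |fderiv ℝ Q x (Pi.single i 1)| ≤ |fderiv ℝ Q x (Pi.single j 1)|) :
    ∃ α : ℝ, max 0 (Q (x + α • (Pi.single j 1 : Fin d → ℝ)) - Q xbar) ≤
      Real.exp (-(ρm / (ρp1 * (Fbar \ F).card))) * max 0 (Q x - Q xbar) := by
  classical
  set e : Fin d → (Fin d → ℝ) := fun i => Pi.single i 1 with he
  set g : Fin d → ℝ := fun i => fderiv ℝ Q x (e i) with hg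
  clear_value g
  have hee : ∀ i, e i = Pi.single i 1 := fun i => by rw [he]
  have hgg : ∀ i, g i = fderiv ℝ Q x (e i) := fun i => by rw [hg]
  clear_value e
  clear he hg
  -- linearity of the differential
  have hlin : ∀ v : Fin d → ℝ, fderiv ℝ Q x v = ∑ i, v i * g i := by
    intro v
    have hv : v = ∑ i, v i • e i := by
      funext k
      simp [hee, Pi.single_apply, Finset.sum_apply]
    conv_lhs => rw [hv]
    rw [map_sum]
    simp only [map_smul, smul_eq_mul]
    exact Finset.sum_congr rfl fun i _ => by rw [hgg]
  -- squared l2 norm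
  have hl2sq : ∀ v : Fin d → ℝ, (l2 v) ^ 2 = ∑ i, v i ^ 2 := by
    intro v
    rw [l2, Real.sq_sqrt]
    positivity
  -- partial derivatives vanish on F
  have hgF : ∀ i ∈ F, g i = 0 := by
    intro i hi
    have hcurve : HasDerivAt (fun t : ℝ => x + t • e i) (e i) 0 := by
      simpa using ((hasDerivAt_id (0 : ℝ)).smul_const (e i)).const_add x
    have hφ : HasDerivAt (fun t : ℝ => Q (x + t • e i)) (g i) 0 := by
      have h0 : HasFDerivAt Q (fderiv ℝ Q x) ((fun t : ℝ => x + t • e i) 0) := by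
        simpa using (hQ x).hasFDerivAt
      rw [hgg]
      exact h0.comp_hasDerivAt 0 hcurve
    have hmin : IsLocalMin (fun t : ℝ => Q (x + t • e i)) 0 := by
      apply Filter.Eventually.of_forall
      intro t
      have hz : ∀ k, k ∉ F → (x + t • e i) k = 0 := by
        intro k hk
        have h1 : e i k = 0 := by
          rw [hee]
          simp only [Pi.single_apply]
          rw [if_neg]
          rintro rfl
          exact hk hi
        simp [hxF k hk, h1]
      have := hxmin _ hz
      simpa using this
    exact hmin.hasDerivAt_eq_zero hφ
  by_cases hle : Q x ≤ Q xbar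
  · refine ⟨0, ?_⟩
    have h1 : max 0 (Q x - Q xbar) = 0 := max_eq_left (by linarith)
    rw [h1, mul_zero]
    simpa using le_of_eq h1
  push_neg at hle
  set δ : ℝ := Q x - Q xbar with hδ
  clear_value δ
  have hδpos : 0 < δ := by rw [hδ]; linarith
  set m : ℕ := (Fbar \ F).card with hm
  clear_value m
  have hmpos : 0 < m := by rw [hm]; exact Finset.card_pos.2 hne
  have hmR : (1 : ℝ) ≤ (m : ℝ) := by exact_mod_cast hmpos
  have hmRpos : (0 : ℝ) < (m : ℝ) := lt_of_lt_of_le one_pos hmR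
  set T : ℝ := ∑ i ∈ Fbar \ F, |xbar i| with hT
  clear_value T
  set G : ℝ := |g j| with hG
  clear_value G
  -- T > 0
  have hTnn : 0 ≤ T := hT ▸ Finset.sum_nonneg fun i _ => abs_nonneg _
  have hTpos : 0 < T := by
    rcases lt_or_eq_of_le hTnn with h | h
    · exact h
    · exfalso
      have hz : ∀ i ∉ F, xbar i = 0 := by
        intro i hi
        by_cases hib : i ∈ Fbar
        · have : |xbar i| = 0 := by
            have := Finset.sum_eq_zero_iff_of_nonneg (fun k _ => abs_nonneg (xbar k)) |>.1 (hT ▸ h.symm)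
            exact this i (Finset.mem_sdiff.2 ⟨hib, hi⟩)
          exact abs_eq_zero.1 this
        · exact hsupp i hib
      exact absurd (hxmin xbar hz) (not_le.2 hle)
  -- lower bound application
  have hs1 : l0 (x - xbar) ≤ s := by
    refine le_trans (Finset.card_le_card ?_) hscard
    intro i hi
    simp only [l0, Finset.mem_filter, Finset.mem_univ, true_and, Pi.sub_apply] at hi
    by_contra hc
    simp only [Finset.mem_union, not_or] at hc
    rw [hxF i hc.1, hsupp i hc.2] at hi
    exact hi (by ring)
  have hlow := hlower x xbar hs1
  -- pairing identity
  have hpair : fderiv ℝ Q x (xbar - x) = ∑ i ∈ Fbar \ F, xbar i * g i := by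
    rw [hlin]
    rw [← Finset.sum_subset (Finset.subset_univ (Fbar \ F))]
    · refine Finset.sum_congr rfl fun i hi => ?_
      rw [Finset.mem_sdiff] at hi
      rw [Pi.sub_apply, hxF i hi.2]
      ring
    · intro i _ hi
      rw [Finset.mem_sdiff, not_and_or, not_not] at hi
      rcases hi with hi | hi
      · rw [Pi.sub_apply, hsupp i hi]
        by_cases hiF : i ∈ F
        · rw [hgF i hiF]; ring
        · rw [hxF i hiF]; ring
      · rw [hgF i hi]; ring
  have hpairbd : -(fderiv ℝ Q x (xbar - x)) ≤ T * G := by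
    rw [hpair]
    calc -(∑ i ∈ Fbar \ F, xbar i * g i) ≤ |∑ i ∈ Fbar \ F, xbar i * g i| :=
          neg_le_abs _
      _ ≤ ∑ i ∈ Fbar \ F, |xbar i * g i| := Finset.abs_sum_le_sum_abs _ _
      _ ≤ ∑ i ∈ Fbar \ F, |xbar i| * G := by
          refine Finset.sum_le_sum fun i _ => ?_
          rw [abs_mul]
          have hj' : |g i| ≤ G := by
            rw [hG, hgg i, hgg j, hee i, hee j]; exact hj i
          exact mul_le_mul_of_nonneg_left hj' (abs_nonneg _)
      _ = T * G := by rw [hT, hG, Finset.sum_mul]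
  have hkey1 : δ + ρm * (l2 (x - xbar)) ^ 2 ≤ T * G := by
    have : ρm * (l2 (x - xbar)) ^ 2 ≤ Q xbar - Q x - fderiv ℝ Q x (xbar - x) := hlow
    have h2 : Q xbar - Q x = -δ := by rw [hδ]; ring
    linarith [hpairbd]
  -- Cauchy–Schwarz
  have hCS : T ^ 2 ≤ (m : ℝ) * (l2 (x - xbar)) ^ 2 := by
    have h1 : T ^ 2 ≤ (m : ℝ) * ∑ i ∈ Fbar \ F, |xbar i| ^ 2 := by
      rw [hT, hm]
      exact_mod_cast sq_sum_le_card_mul_sum_sq (s := Fbar \ F) (f := fun i => |xbar i|)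
    refine h1.trans (mul_le_mul_of_nonneg_left ?_ (Nat.cast_nonneg m))
    rw [hl2sq]
    calc ∑ i ∈ Fbar \ F, |xbar i| ^ 2 = ∑ i ∈ Fbar \ F, (x - xbar) i ^ 2 := by
          refine Finset.sum_congr rfl fun i hi => ?_
          rw [Finset.mem_sdiff] at hi
          rw [Pi.sub_apply, hxF i hi.2, sq_abs]
          ring
      _ ≤ ∑ i, (x - xbar) i ^ 2 :=
          Finset.sum_le_sum_of_subset_of_nonneg (Finset.subset_univ _)
            (fun i _ _ => sq_nonneg _)
  -- key inequality on G
  have hGkey : 4 * ρm * δ ≤ (m : ℝ) * G ^ 2 := by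
    have h1 : δ + ρm * (T ^ 2 / m) ≤ T * G := by
      refine le_trans ?_ hkey1
      have : T ^ 2 / m ≤ (l2 (x - xbar)) ^ 2 := by
        rw [div_le_iff₀ hmRpos]
        linarith [hCS]
      nlinarith [hρm]
    have hmpos' : (0 : ℝ) < (m : ℝ) := hmRpos
    have h2 : (m : ℝ) * δ + ρm * T ^ 2 ≤ (m : ℝ) * (T * G) := by
      have := mul_le_mul_of_nonneg_left h1 (le_of_lt hmpos')
      calc (m : ℝ) * δ + ρm * T ^ 2 = (m : ℝ) * (δ + ρm * (T ^ 2 / m)) := by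
            field_simp
        _ ≤ (m : ℝ) * (T * G) := this
    have hmt : (0 : ℝ) < (m : ℝ) * T ^ 2 := mul_pos hmRpos (by positivity)
    have hl : (0 : ℝ) ≤ (m : ℝ) * δ + ρm * T ^ 2 :=
      add_nonneg (mul_nonneg hmRpos.le hδpos.le) (mul_nonneg hρm.le (sq_nonneg _))
    have hGnn : 0 ≤ G := by rw [hG]; exact abs_nonneg _
    have h3 := mul_le_mul h2 h2 hl
      (mul_nonneg hmRpos.le (mul_nonneg hTpos.le hGnn))
    nlinarith [h3, sq_nonneg ((m : ℝ) * δ - ρm * T ^ 2), hmt, hTpos, hmpos']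
  -- choose α
  set α : ℝ := -(g j) / (2 * ρp1) with hα
  clear_value α
  refine ⟨α, ?_⟩
  have hgrw : (Pi.single j 1 : Fin d → ℝ) = e j := (hee j).symm
  rw [hgrw]
  -- upper bound application
  have hs2 : l0 (x - (x + α • e j)) ≤ 1 := by
    have hsub : (Finset.univ.filter fun i => (x - (x + α • e j)) i ≠ 0) ⊆ {j} := by
      intro i hi
      simp only [Finset.mem_filter, Finset.mem_univ, true_and, Pi.sub_apply, Pi.add_apply,
        Pi.smul_apply, smul_eq_mul] at hi
      simp only [Finset.mem_singleton]
      by_contra hc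
      have : e j i = 0 := by
        rw [hee]
        simp only [Pi.single_apply]
        rw [if_neg hc]
      rw [this] at hi
      exact hi (by ring)
    calc l0 (x - (x + α • e j)) ≤ ({j} : Finset (Fin d)).card := Finset.card_le_card hsub
      _ = 1 := Finset.card_singleton j
  have hup := hupper1 x (x + α • e j) hs2
  have hl2α : (l2 (x - (x + α • e j))) ^ 2 = α ^ 2 := by
    rw [hl2sq]
    have : ∀ i, (x - (x + α • e j)) i ^ 2 = α ^ 2 * e j i ^ 2 := by
      intro i
      simp only [Pi.sub_apply, Pi.add_apply, Pi.smul_apply, smul_eq_mul]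
      ring
    rw [Finset.sum_congr rfl fun i _ => this i, ← Finset.mul_sum]
    have : ∑ i, e j i ^ 2 = 1 := by
      rw [Finset.sum_eq_single j]
      · rw [hee]; simp
      · intro i _ hi
        rw [hee]
        simp only [Pi.single_apply]
        rw [if_neg hi]
        ring
      · intro h; exact absurd (Finset.mem_univ j) h
    rw [this, mul_one]
  have hderivα : fderiv ℝ Q x ((x + α • e j) - x) = α * g j := by
    have : (x + α • e j) - x = α • e j := by abel
    rw [this, map_smul, smul_eq_mul, hgg]
  have hupper : Q (x + α • e j) ≤ Q x - g j ^ 2 / (4 * ρp1) := by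
    rw [hderivα, hl2α] at hup
    have hkey' := quadMinAux ρp1 (g j) (ne_of_gt hρp1)
    have hk2 : α * g j + ρp1 * α ^ 2 = -(g j ^ 2 / (4 * ρp1)) := by
      rw [hα]; exact hkey'
    linarith [hup, hk2]
  -- conclude
  set t : ℝ := ρm / (ρp1 * m) with ht
  clear_value t
  have hpm : (0 : ℝ) < ρp1 * (m : ℝ) := mul_pos hρp1 hmRpos
  have htpos : 0 < t := by rw [ht]; exact div_pos hρm hpm
  have ht1 : t ≤ 1 := by
    rw [ht, div_le_one hpm]
    calc ρm ≤ ρp1 := hρ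
      _ = ρp1 * 1 := (mul_one _).symm
      _ ≤ ρp1 * m := by
          exact mul_le_mul_of_nonneg_left hmR (le_of_lt hρp1)
  have hG2t : δ * t ≤ g j ^ 2 / (4 * ρp1) := by
    have hGsq : G ^ 2 = g j ^ 2 := by rw [hG]; exact sq_abs _
    rw [ht, ← hGsq, le_div_iff₀ (by positivity : (0 : ℝ) < 4 * ρp1)]
    have hr : ρm / (ρp1 * (m : ℝ)) * (ρp1 * (m : ℝ)) = ρm := div_mul_cancel₀ _ hpm.ne'
    refine le_of_mul_le_mul_right ?_ hmRpos
    calc δ * (ρm / (ρp1 * (m : ℝ))) * (4 * ρp1) * (m : ℝ)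
        = 4 * (ρm / (ρp1 * (m : ℝ)) * (ρp1 * (m : ℝ))) * δ := by ring
      _ = 4 * ρm * δ := by rw [hr]
      _ ≤ (m : ℝ) * G ^ 2 := hGkey
      _ = G ^ 2 * (m : ℝ) := mul_comm _ _
  have hQnew : Q (x + α • e j) - Q xbar ≤ δ * (1 - t) := by
    have h0 : Q x - Q xbar = δ := by rw [hδ]
    have hexp : δ * (1 - t) = δ - δ * t := by ring
    rw [hexp]
    have s1 : Q (x + α • e j) - Q xbar ≤ (Q x - g j ^ 2 / (4 * ρp1)) - Q xbar := by
      linarith [hupper]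
    have s2 : (Q x - g j ^ 2 / (4 * ρp1)) - Q xbar ≤ (Q x - δ * t) - Q xbar := by
      linarith [hG2t]
    have s3 : (Q x - δ * t) - Q xbar = δ - δ * t := by linarith [h0]
    linarith [s1, s2, s3]
  have hrhs : δ * (1 - t) ≤ Real.exp (-t) * δ := by
    have h1 : 1 - t ≤ Real.exp (-t) := by
      have := Real.add_one_le_exp (-t)
      linarith
    calc δ * (1 - t) ≤ δ * Real.exp (-t) := mul_le_mul_of_nonneg_left h1 (le_of_lt hδpos)
      _ = Real.exp (-t) * δ := mul_comm _ _
  rw [max_eq_right (le_of_lt hδpos)]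
  refine max_le ?_ (le_trans hQnew hrhs)
  exact mul_nonneg (Real.exp_nonneg _) (le_of_lt hδpos)
end
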